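/- arXiv:2403.18429 — 2 statements merged into one kernel-verified Lean document; each statement's English description precedes it below -/
import Mathlib

section
/- There exists a finite simple connected graph G with at least two vertices such that μ(G) > max over all pairs of adjacent vertices v_i ~ v_j of G of (2·(m_i² + m_i·m_j + m_j²) − (d_i² + d_j²))/(m_i + m_j). (This disproves conjectured edge-maximum bound 59 of Brankov, Hansen and Stevanović.) -/
/-!
The counterexample is an explicit connected graph on 12 vertices and 15 edges. On each of its
edges the bound is at most `37/6`, while the Rayleigh quotient of an integer test vector `x`
gives `μ ≥ xᵀ L x / xᵀ x = 625/99 > 37/6`. Both estimates are finite rational computations.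
-/

noncomputable section

open Finset

/-- The degree of a vertex, as a real number. -/
def degR {V : Type*} [Fintype V] (G : SimpleGraph V) (v : V) : ℝ :=
  letI := Classical.decRel G.Adj
  (G.degree v : ℝ)

/-- The average degree of the neighbours of a vertex, as a real number:
`m_v = (∑_{u ~ v} d_u) / d_v`. -/
def avgDegR {V : Type*} [Fintype V] (G : SimpleGraph V) (v : V) : ℝ :=
  letI := Classical.decRel G.Adj
  (∑ u ∈ G.neighborFinset v, (G.degree u : ℝ)) / (G.degree v : ℝ)

/-- The largest eigenvalue of the Laplacian matrix `L = D - A` of a finite graph. -/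
def lapSpecRad {V : Type*} [Fintype V] [DecidableEq V] [Nonempty V]
    (G : SimpleGraph V) : ℝ :=
  letI := Classical.decRel G.Adj
  ⨆ i, (SimpleGraph.posSemidef_lapMatrix ℝ G).isHermitian.eigenvalues i

open Matrix

open scoped MatrixOrder in
theorem Matrix.IsHermitian.dotProduct_mulVec_le_iSup_eigenvalues {n : Type*} [Fintype n]
    [DecidableEq n] [Nonempty n] {A : Matrix n n ℝ} (hA : A.IsHermitian) (x : n → ℝ) :
    x ⬝ᵥ (A *ᵥ x) ≤ (⨆ i, hA.eigenvalues i) * (x ⬝ᵥ x) := by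
  have hle : A ≤ algebraMap ℝ (Matrix n n ℝ) (⨆ i, hA.eigenvalues i) := by
    refine le_algebraMap_of_spectrum_le ?_ hA
    rw [hA.spectrum_real_eq_range_eigenvalues]
    rintro _ ⟨i, rfl⟩
    exact le_ciSup (Set.finite_range _).bddAbove i
  simpa [sub_mulVec, dotProduct_sub, Algebra.algebraMap_eq_smul_one, smul_mulVec,
    dotProduct_smul] using (Matrix.le_iff.mp hle).dotProduct_mulVec_nonneg x

namespace SimpleGraph

variable {V : Type*} (G : SimpleGraph V)

theorem connected_of_forall_exists_lt_adj [Preorder V] [WellFoundedLT V] (r : V)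
    (h : ∀ v ≠ r, ∃ u < v, G.Adj u v) : G.Connected := by
  refine G.connected_iff_exists_forall_reachable.mpr ⟨r, fun v => ?_⟩
  induction v using WellFoundedLT.induction with
  | _ v ih =>
    by_cases hv : v = r
    · exact hv ▸ .rfl
    · obtain ⟨u, huv, hadj⟩ := h v hv
      exact (ih u huv).trans hadj.reachable

variable [Fintype V]

theorem degR_eq [DecidableRel G.Adj] (v : V) : degR G v = G.degree v := by
  unfold degR
  congr!

theorem avgDegR_eq [DecidableRel G.Adj] (v : V) :
    avgDegR G v = (∑ u ∈ G.neighborFinset v, G.degree u : ℕ) / (G.degree v : ℝ) := by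
  unfold avgDegR
  push_cast
  congr!

theorem dotProduct_lapMatrix_mulVec_le_lapSpecRad [DecidableEq V] [Nonempty V]
    [DecidableRel G.Adj] (x : V → ℝ) :
    x ⬝ᵥ (G.lapMatrix ℝ *ᵥ x) ≤ lapSpecRad G * (x ⬝ᵥ x) := by
  unfold lapSpecRad
  convert (posSemidef_lapMatrix ℝ G).isHermitian.dotProduct_mulVec_le_iSup_eigenvalues x

theorem lapMatrix_map [DecidableEq V] [DecidableRel G.Adj] {R S : Type*} [Ring R] [Ring S]
    (f : R →+* S) : (G.lapMatrix R).map f = G.lapMatrix S := by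
  ext i j
  by_cases h : i = j <;> by_cases h' : G.Adj i j <;>
    simp [lapMatrix, degMatrix, adjMatrix_apply, h, h']

end SimpleGraph

def bound59 {K : Type*} [DivisionRing K] (di mi dj mj : K) : K :=
  (2 * (mi ^ 2 + mi * mj + mj ^ 2) - (di ^ 2 + dj ^ 2)) / (mi + mj)

namespace Counterexample59

-- Vertices are numbered in breadth-first order from `0`, which makes connectivity decidable
-- through `connected_of_forall_exists_lt_adj`.
def edges : List (Fin 12 × Fin 12) :=
  [(0, 1), (0, 2), (0, 3), (1, 4), (1, 5), (3, 4), (3, 5), (4, 6), (4, 7), (5, 6), (5, 8), (6, 9),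
    (7, 10), (8, 10), (9, 11)]

def graph : SimpleGraph (Fin 12) := SimpleGraph.fromEdgeSet {e | ∃ p ∈ edges, s(p.1, p.2) = e}

instance : DecidableRel graph.Adj := fun a b =>
  decidable_of_iff (a ≠ b ∧ ∃ p ∈ edges, s(p.1, p.2) = s(a, b)) (by simp [graph, and_comm])

def testVector : Fin 12 → ℚ := ![2, -4, 0, -4, 5, 5, -3, -1, -1, 1, 1, 0]

theorem connected : graph.Connected :=
  graph.connected_of_forall_exists_lt_adj 0 (by decide)

theorem bound59_lt (i j : Fin 12) (hij : graph.Adj i j) :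
    bound59 (graph.degree i : ℚ)
      ((∑ u ∈ graph.neighborFinset i, graph.degree u : ℕ) / graph.degree i) (graph.degree j)
      ((∑ u ∈ graph.neighborFinset j, graph.degree u : ℕ) / graph.degree j) < 625 / 99 := by
  revert i j
  decide +kernel

theorem testVector_lapMatrix : testVector ⬝ᵥ (graph.lapMatrix ℚ *ᵥ testVector) = 625 := by
  decide +kernel

theorem testVector_dotProduct_self : testVector ⬝ᵥ testVector = 99 := by
  decide +kernel

theorem le_lapSpecRad : (625 / 99 : ℝ) ≤ lapSpecRad graph := by
  set f := Rat.castHom ℝ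
  have hquad : (f ∘ testVector) ⬝ᵥ (graph.lapMatrix ℝ *ᵥ (f ∘ testVector)) = 625 := by
    rw [← graph.lapMatrix_map f, ← funext (f.map_mulVec _ testVector)]
    exact (f.map_dotProduct _ _).symm.trans (by rw [testVector_lapMatrix, map_ofNat])
  have hnorm : (f ∘ testVector) ⬝ᵥ (f ∘ testVector) = 99 := by
    rw [← f.map_dotProduct, testVector_dotProduct_self, map_ofNat]
  have h := graph.dotProduct_lapMatrix_mulVec_le_lapSpecRad (f ∘ testVector)
  rw [hquad, hnorm] at h
  rwa [div_le_iff₀ (by norm_num)]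

end Counterexample59

open Counterexample59 in
/-- There exists a finite simple connected graph `G` with at least two vertices whose
Laplacian spectral radius exceeds the conjectured edge-maximum bound. -/
theorem exists_counterexample_bound59 :
    ∃ (V : Type) (_ : Fintype V) (_ : DecidableEq V) (_ : Nonempty V)
      (G : SimpleGraph V), G.Connected ∧ 2 ≤ Fintype.card V ∧
      ∀ i j : V, G.Adj i j →
        (fun di mi dj mj => (2 * (mi ^ 2 + mi * mj + mj ^ 2) - (di ^ 2 + dj ^ 2)) / (mi + mj))
          (degR G i) (avgDegR G i) (degR G j) (avgDegR G j) < lapSpecRad G := by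
  refine ⟨Fin 12, inferInstance, inferInstance, inferInstance, graph, connected, by simp,
    fun i j hij => ?_⟩
  calc _ = ((bound59 (graph.degree i : ℚ)
          ((∑ u ∈ graph.neighborFinset i, graph.degree u : ℕ) / graph.degree i) (graph.degree j)
          ((∑ u ∈ graph.neighborFinset j, graph.degree u : ℕ) / graph.degree j) : ℚ) : ℝ) := by
        simp only [graph.degR_eq, graph.avgDegR_eq]
        push_cast [bound59]
        rfl
    _ < ((625 / 99 : ℚ) : ℝ) := by exact_mod_cast bound59_lt i j hij
    _ ≤ lapSpecRad graph := by push_cast; exact le_lapSpecRad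

end
end

section
/- There exists a finite simple connected graph G with at least two vertices such that μ(G) > max over all pairs of adjacent vertices v_i ~ v_j of G of (m_i² + 4·m_i·m_j + m_j² − (d_i·m_i + d_j·m_j))/(d_i + d_j). (This disproves conjectured edge-maximum bound 66 of Brankov, Hansen and Stevanović.) -/
noncomputable section

open Finset

/-!
The counterexample is the spider with three legs of length three. Its edge bound is largest on the
pendant edges, where `d = (2, 1)` and `m = (3/2, 2)` give `53/12 ≈ 4.417`. On the other hand `μ` is
at least every Rayleigh quotient `xᵀLx / xᵀx = ∑_{i ~ j} (x_i - x_j)² / ∑ x_i²`, because `μ • 1 - L`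
is positive semidefinite; the vector equal to `(4, -2, 1, 0)` along each leg gives `138/31 ≈ 4.452`.
-/

namespace Matrix.IsHermitian

variable {n : Type*} [Fintype n] [DecidableEq n]

open scoped ComplexOrder in
theorem posSemidef_smul_one_sub {𝕜 : Type*} [RCLike 𝕜] {A : Matrix n n 𝕜} (hA : A.IsHermitian)
    {c : ℝ} (hc : ∀ i, hA.eigenvalues i ≤ c) :
    (c • 1 - A).PosSemidef := by
  have hdiag : diagonal (fun i ↦ ((c - hA.eigenvalues i : ℝ) : 𝕜)) =
      c • 1 - diagonal (RCLike.ofReal ∘ hA.eigenvalues) := by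
    ext i j
    by_cases h : i = j <;> simp [h, RCLike.real_smul_eq_coe_mul]
  have hconj : c • 1 - A = (hA.eigenvectorUnitary : Matrix n n 𝕜) *
      diagonal (fun i ↦ ((c - hA.eigenvalues i : ℝ) : 𝕜)) *
      star (hA.eigenvectorUnitary : Matrix n n 𝕜) := by
    conv_lhs => rw [hA.spectral_theorem, Unitary.conjStarAlgAut_apply]
    rw [hdiag, mul_sub, sub_mul, mul_smul_comm, mul_one, smul_mul_assoc,
      Unitary.mul_star_self_of_mem hA.eigenvectorUnitary.2]
  rw [hconj, Matrix.IsUnit.posSemidef_star_right_conjugate_iff Unitary.isUnit_coe,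
    posSemidef_diagonal_iff]
  exact fun i ↦ by simpa using sub_nonneg.mpr (hc i)

theorem dotProduct_mulVec_le {A : Matrix n n ℝ} (hA : A.IsHermitian) {c : ℝ}
    (hc : ∀ i, hA.eigenvalues i ≤ c) (x : n → ℝ) : x ⬝ᵥ A *ᵥ x ≤ c * (x ⬝ᵥ x) := by
  simpa [sub_mulVec, dotProduct_sub, smul_mulVec, dotProduct_smul] using
    (hA.posSemidef_smul_one_sub hc).dotProduct_mulVec_nonneg x

end Matrix.IsHermitian

namespace SimpleGraph

variable {V : Type*}

theorem reachable_of_forall_exists_adj_lt [Preorder V] [WellFoundedLT V] {G : SimpleGraph V}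
    {r : V} (h : ∀ v, v ≠ r → ∃ u < v, G.Adj u v) (v : V) : G.Reachable r v := by
  induction v using WellFoundedLT.induction with
  | _ v ih =>
    by_cases hv : v = r
    · subst hv; rfl
    · obtain ⟨u, hu, huv⟩ := h v hv
      exact (ih u hu).trans huv.reachable

theorem connected_of_forall_exists_adj_lt [Preorder V] [WellFoundedLT V] {G : SimpleGraph V}
    (r : V) (h : ∀ v, v ≠ r → ∃ u < v, G.Adj u v) : G.Connected :=
  haveI : Nonempty V := ⟨r⟩
  ⟨fun u v ↦ (reachable_of_forall_exists_adj_lt h u).symm.trans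
    (reachable_of_forall_exists_adj_lt h v)⟩

end SimpleGraph

open SimpleGraph

section

variable {V : Type*} [Fintype V] (G : SimpleGraph V) [DecidableRel G.Adj]

theorem degR_eq_degree (v : V) : degR G v = G.degree v := by
  unfold degR
  congr!

theorem avgDegR_eq (v : V) :
    avgDegR G v = ((∑ u ∈ G.neighborFinset v, G.degree u : ℕ) : ℝ) / G.degree v := by
  unfold avgDegR
  push_cast
  congr!

theorem sum_adj_sq_sub_le_lapSpecRad_mul [DecidableEq V] [Nonempty V] (x : V → ℝ) :
    (∑ i, ∑ j, if G.Adj i j then (x i - x j) ^ 2 else 0) / 2 ≤ lapSpecRad G * ∑ i, x i ^ 2 := by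
  obtain rfl : ‹DecidableRel G.Adj› = Classical.decRel G.Adj := Subsingleton.elim _ _
  let := Classical.decRel G.Adj
  have hG := (posSemidef_lapMatrix ℝ G).isHermitian
  rw [← lapMatrix_toLinearMap₂', Matrix.toLinearMap₂'_apply']
  refine (hG.dotProduct_mulVec_le (fun i ↦ le_ciSup (Set.finite_range _).bddAbove i) x).trans_eq ?_
  simp [lapSpecRad, dotProduct, sq]

end

def spider : SimpleGraph (Fin 10) :=
  fromEdgeSet ↑({s(0, 1), s(1, 2), s(2, 3), s(0, 4), s(4, 5), s(5, 6), s(0, 7), s(7, 8), s(8, 9)} :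
    Finset (Sym2 (Fin 10)))

instance : DecidableRel spider.Adj :=
  inferInstanceAs (DecidableRel (fromEdgeSet _).Adj)

theorem spider_connected : spider.Connected :=
  connected_of_forall_exists_adj_lt 0 (by decide)

theorem spider_adj_degrees {i j : Fin 10} (h : spider.Adj i j) :
    (spider.degree i, ∑ u ∈ spider.neighborFinset i, spider.degree u,
      spider.degree j, ∑ u ∈ spider.neighborFinset j, spider.degree u) ∈
    ({(3, 6, 2, 5), (2, 5, 3, 6), (2, 5, 2, 3), (2, 3, 2, 5), (2, 3, 1, 2), (1, 2, 2, 3)} :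
      Finset (ℕ × ℕ × ℕ × ℕ)) := by
  revert i j
  decide

theorem le_lapSpecRad_spider : 138 / 31 ≤ lapSpecRad spider := by
  -- an integer approximation of the Perron eigenvector `(1, -0.494, 0.225, -0.065)` on each leg
  let w : Fin 10 → ℤ := ![4, -2, 1, 0, -2, 1, 0, -2, 1, 0]
  have hnum : (∑ i, ∑ j, if spider.Adj i j then (w i - w j) ^ 2 else 0) = 276 := by decide
  have hden : ∑ i, w i ^ 2 = 31 := by decide
  have h := sum_adj_sq_sub_le_lapSpecRad_mul spider (fun i ↦ (w i : ℝ))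
  rw [show (∑ i, ∑ j, if spider.Adj i j then ((w i : ℝ) - w j) ^ 2 else 0) = 276 by
    exact_mod_cast hnum, show ∑ i, (w i : ℝ) ^ 2 = 31 by exact_mod_cast hden] at h
  rw [div_le_iff₀ (by norm_num)]
  linarith

/-- There exists a finite simple connected graph `G` with at least two vertices whose
Laplacian spectral radius exceeds the conjectured edge-maximum bound. -/
theorem exists_counterexample_bound66 :
    ∃ (V : Type) (_ : Fintype V) (_ : DecidableEq V) (_ : Nonempty V)
      (G : SimpleGraph V), G.Connected ∧ 2 ≤ Fintype.card V ∧
      ∀ i j : V, G.Adj i j →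
        (fun di mi dj mj => (mi ^ 2 + 4 * mi * mj + mj ^ 2 - (di * mi + dj * mj)) / (di + dj))
          (degR G i) (avgDegR G i) (degR G j) (avgDegR G j) < lapSpecRad G := by
  refine ⟨Fin 10, inferInstance, inferInstance, inferInstance, spider, spider_connected, by simp,
    fun i j hij ↦ lt_of_lt_of_le ?_ le_lapSpecRad_spider⟩
  have h := spider_adj_degrees hij
  simp only [Finset.mem_insert, Finset.mem_singleton, Prod.mk.injEq] at h
  simp only [degR_eq_degree, avgDegR_eq]
  rcases h with ⟨hdi, hsi, hdj, hsj⟩ | ⟨hdi, hsi, hdj, hsj⟩ | ⟨hdi, hsi, hdj, hsj⟩ |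
    ⟨hdi, hsi, hdj, hsj⟩ | ⟨hdi, hsi, hdj, hsj⟩ | ⟨hdi, hsi, hdj, hsj⟩ <;>
  · rw [hdi, hsi, hdj, hsj]
    norm_num
end
end
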